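/- Let V be a finite-dimensional real vector space and let L ⊆ 𝕋V = V ⊕ V* be a lagrangian subspace (i.e. L equals its orthogonal complement with respect to the pairing ⟨X+ξ, Y+η⟩ = (1/2)(η(X)+ξ(Y))). Set E := pr_V(L), the image of L under the projection V ⊕ V* → V. Then there exists a unique alternating bilinear form ε : E × E → ℝ such that L = L(E,ε) := {X + ξ ∈ V ⊕ V* : X ∈ E and ξ(Y) = ε(X,Y) for all Y ∈ E}. -/

import Mathlib

/-
If `L` is lagrangian, then `(0, ξ) ∈ L` exactly when `ξ` annihilates `E = pr_V L`, so two elements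
of `L` over the same point of `E` have covectors agreeing on `E`. Hence `X + ξ ↦ ξ|_E` descends
along the surjection `pr_V : L → E` to a linear map `ε : E → E*`, which is alternating because
`L` is isotropic, and every `X + ξ` with `X ∈ E` and `ξ|_E = ε X` differs from an element of `L`
by some `(0, η)` with `η ∈ Ann E`, hence lies in `L`. Uniqueness is surjectivity of `pr_V`.
-/

open TensorProduct Module

noncomputable section

namespace CDirac


/-- The real generalized tangent space `V ⊕ V*`. -/
abbrev TR (V : Type*) [AddCommGroup V] [Module ℝ V] := V × (V →ₗ[ℝ] ℝ)

variable {V : Type*} [AddCommGroup V] [Module ℝ V]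

/-- The canonical pairing `⟨X+ξ, Y+η⟩ = (η X + ξ Y)/2` on `𝕋V`. -/
def pairR (a b : TR V) : ℝ := (b.2 a.1 + a.2 b.1) / 2

lemma pairR_add_left (a a' b : TR V) : pairR (a + a') b = pairR a b + pairR a' b := by
  simp only [pairR, Prod.fst_add, Prod.snd_add, map_add, LinearMap.add_apply]
  ring

lemma pairR_smul_left (c : ℝ) (a b : TR V) : pairR (c • a) b = c * pairR a b := by
  simp only [pairR, Prod.smul_fst, Prod.smul_snd, map_smul, LinearMap.smul_apply,
    smul_eq_mul]
  ring

/-- Orthogonal complement with respect to the pairing on `𝕋V`. -/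
def orthR (L : Submodule ℝ (TR V)) : Submodule ℝ (TR V) where
  carrier := {a | ∀ b ∈ L, pairR a b = 0}
  zero_mem' := fun b _ => by simp [pairR]
  add_mem' := fun {a a'} ha ha' b hb => by
    rw [pairR_add_left, ha b hb, ha' b hb, add_zero]
  smul_mem' := fun c a ha b hb => by rw [pairR_smul_left, ha b hb, mul_zero]

/-- A real lagrangian subspace: `L = L^⊥`. -/
def IsLagrangianR (L : Submodule ℝ (TR V)) : Prop := L = orthR L

/-- An isotropic subspace of `𝕋V`. -/
def IsIsotropicR (K : Submodule ℝ (TR V)) : Prop := ∀ a ∈ K, ∀ b ∈ K, pairR a b = 0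

/-- The quotient `K^⊥/K`. -/
abbrev quotK (K : Submodule ℝ (TR V)) :=
  @HasQuotient.Quotient ↥(orthR K) _ (Submodule.hasQuotient (R := ℝ)) (K.comap (orthR K).subtype)

/-- The quotient map `K^⊥ → K^⊥/K`. -/
def mkK (K : Submodule ℝ (TR V)) : ↥(orthR K) →ₗ[ℝ] quotK K :=
  Submodule.mkQ (R := ℝ) (M := ↥(orthR K)) _




/-- The complexification `V_ℂ = ℂ ⊗_ℝ V`. -/
abbrev Cx (V : Type*) [AddCommGroup V] [Module ℝ V] := ℂ ⊗[ℝ] V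

/-- The complex dual `(V_ℂ)^*`. -/
abbrev DualC (V : Type*) [AddCommGroup V] [Module ℝ V] := Cx V →ₗ[ℂ] ℂ

/-- The complexified generalized tangent space `𝕋_ℂ V = V_ℂ ⊕ (V_ℂ)^*`. -/
abbrev TCx (V : Type*) [AddCommGroup V] [Module ℝ V] := Cx V × DualC V

/-- The ℂ-bilinear pairing on `𝕋_ℂ V`. -/
def pairC (a b : TCx V) : ℂ := (b.2 a.1 + a.2 b.1) / 2

lemma pairC_add_left (a a' b : TCx V) : pairC (a + a') b = pairC a b + pairC a' b := by
  simp only [pairC, Prod.fst_add, Prod.snd_add, map_add, LinearMap.add_apply]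
  ring

lemma pairC_smul_left (c : ℂ) (a b : TCx V) : pairC (c • a) b = c * pairC a b := by
  simp only [pairC, Prod.smul_fst, Prod.smul_snd, map_smul, LinearMap.smul_apply,
    smul_eq_mul]
  ring

/-- Orthogonal complement with respect to the ℂ-bilinear pairing on `𝕋_ℂ V`. -/
def orthC (L : Submodule ℂ (TCx V)) : Submodule ℂ (TCx V) where
  carrier := {a | ∀ b ∈ L, pairC a b = 0}
  zero_mem' := fun b _ => by simp [pairC]
  add_mem' := fun {a a'} ha ha' b hb => by
    rw [pairC_add_left, ha b hb, ha' b hb, add_zero]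
  smul_mem' := fun c a ha b hb => by rw [pairC_smul_left, ha b hb, mul_zero]

/-- A complex lagrangian subspace: `L = L^⊥`. -/
def IsLagrangianC (L : Submodule ℂ (TCx V)) : Prop := L = orthC L

private lemma conjCxAux_smul (z : ℂ) (x : Cx V) :
    TensorProduct.map Complex.conjAe.toLinearMap LinearMap.id (z • x) =
      starRingEnd ℂ z • TensorProduct.map Complex.conjAe.toLinearMap LinearMap.id x := by
  induction x using TensorProduct.induction_on with
  | zero => simp
  | tmul w v => simp [smul_tmul', smul_eq_mul, Complex.conjAe_coe, map_mul]
  | add x y hx hy => simp only [smul_add, map_add, hx, hy]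

/-- Conjugation on `V_ℂ`, as a `conj`-semilinear map. -/
def conjCx : Cx V →ₛₗ[starRingEnd ℂ] Cx V where
  toFun := TensorProduct.map Complex.conjAe.toLinearMap LinearMap.id
  map_add' := map_add _
  map_smul' := conjCxAux_smul

lemma conjCx_smul (z : ℂ) (x : Cx V) :
    conjCx (z • x) = starRingEnd ℂ z • conjCx x := conjCxAux_smul z x

/-- Conjugation of a complex linear functional. -/
def conjDualFun (ξ : DualC V) : DualC V where
  toFun x := starRingEnd ℂ (ξ (conjCx x))
  map_add' x y := by simp
  map_smul' z x := by
    rw [conjCx_smul, map_smul, smul_eq_mul, map_mul, RingHom.id_apply]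
    simp [smul_eq_mul]

/-- Conjugation on `(V_ℂ)^*`, as a `conj`-semilinear map. -/
def conjDual : DualC V →ₛₗ[starRingEnd ℂ] DualC V where
  toFun := conjDualFun
  map_add' ξ η := by ext x; simp [conjDualFun]
  map_smul' z ξ := by
    ext x
    simp [conjDualFun, smul_eq_mul, map_mul]

/-- Conjugation on `𝕋_ℂ V`, as a `conj`-semilinear map. -/
def conjT : TCx V →ₛₗ[starRingEnd ℂ] TCx V where
  toFun a := (conjCx a.1, conjDual a.2)
  map_add' a b := by simp [Prod.ext_iff]
  map_smul' z a := by
    simp [Prod.ext_iff, Prod.smul_fst, Prod.smul_snd, map_smulₛₗ]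

instance : RingHomSurjective (starRingEnd ℂ) :=
  ⟨fun z => ⟨starRingEnd ℂ z, by simp⟩⟩

/-- The conjugate `L̄` of a ℂ-subspace of `𝕋_ℂ V`. -/
def conjSub (L : Submodule ℂ (TCx V)) : Submodule ℂ (TCx V) := L.map conjT

/-- The conjugate `Ē` of a ℂ-subspace of `V_ℂ`. -/
def conjE (E : Submodule ℂ (Cx V)) : Submodule ℂ (Cx V) := E.map conjCx

/-- The canonical inclusion `V → V_ℂ`, `v ↦ 1 ⊗ v`. -/
def iV : V →ₗ[ℝ] Cx V := TensorProduct.mk ℝ ℂ V 1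





/-- ℝ-linear auxiliary version of the ℂ-linear extension of a real functional. -/
def dualExtAux (α : V →ₗ[ℝ] ℝ) : Cx V →ₗ[ℝ] ℂ :=
  TensorProduct.lift
    (LinearMap.mk₂ ℝ (fun z v => z * (α v : ℂ))
      (fun z w v => by push_cast; ring)
      (fun r z v => by simp only [Complex.real_smul]; ring)
      (fun z v w => by push_cast [map_add]; ring)
      (fun r z v => by simp only [map_smul, smul_eq_mul, Complex.real_smul]; push_cast; ring))

private lemma dualExtAux_smulC (α : V →ₗ[ℝ] ℝ) (z : ℂ) (x : Cx V) :
    dualExtAux α (z • x) = z * dualExtAux α x := by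
  induction x using TensorProduct.induction_on with
  | zero => simp
  | tmul w v =>
      simp only [dualExtAux, smul_tmul', lift.tmul, LinearMap.mk₂_apply, smul_eq_mul]
      ring
  | add x y hx hy => simp only [smul_add, map_add, hx, hy]; ring

/-- The ℂ-linear extension of a real functional `α : V → ℝ` to `V_ℂ`. -/
def dualExtFun (α : V →ₗ[ℝ] ℝ) : DualC V where
  toFun := dualExtAux α
  map_add' := map_add _
  map_smul' z x := by simpa using dualExtAux_smulC α z x

private lemma dualExtFun_tmul (α : V →ₗ[ℝ] ℝ) (z : ℂ) (v : V) :
    dualExtFun α (z ⊗ₜ[ℝ] v) = z * (α v : ℂ) := by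
  simp [dualExtFun, dualExtAux]

/-- The ℂ-linear extension map `V^* → (V_ℂ)^*`, as an ℝ-linear map. -/
def dualExt : (V →ₗ[ℝ] ℝ) →ₗ[ℝ] DualC V where
  toFun := dualExtFun
  map_add' α β := by
    apply LinearMap.ext; intro x
    induction x using TensorProduct.induction_on with
    | zero => simp
    | tmul w v =>
        simp only [dualExtFun_tmul, LinearMap.add_apply]
        push_cast
        ring
    | add x y hx hy =>
        simp only [map_add, LinearMap.add_apply] at *
        rw [hx, hy]
  map_smul' r α := by
    apply LinearMap.ext; intro x
    induction x using TensorProduct.induction_on with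
    | zero => simp
    | tmul w v =>
        simp only [dualExtFun_tmul, RingHom.id_apply, LinearMap.smul_apply,
          LinearMap.smul_apply, smul_eq_mul, Complex.real_smul]
        push_cast
        ring
    | add x y hx hy =>
        simp only [map_add, RingHom.id_apply, LinearMap.smul_apply, smul_eq_mul] at *
        rw [hx, hy]

/-- The canonical inclusion `𝕋V → 𝕋_ℂV`. -/
def iT : TR V →ₗ[ℝ] TCx V where
  toFun a := (iV a.1, dualExt a.2)
  map_add' a b := by simp [Prod.ext_iff]
  map_smul' r a := by simp [Prod.ext_iff]



/-- Auxiliary ℝ-linear version of the ℂ-bilinear extension of a real bilinear form. -/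
def bilinExtAux (B : V →ₗ[ℝ] V →ₗ[ℝ] ℝ) : Cx V →ₗ[ℝ] DualC V :=
  TensorProduct.lift
    (LinearMap.mk₂ ℝ (fun z v => z • dualExt (B v))
      (fun z w v => by simp only [add_smul])
      (fun r z v => by simp only [smul_assoc])
      (fun z v w => by simp only [map_add, smul_add])
      (fun r z v => by simp only [map_smul]; exact smul_comm z r _))

private lemma bilinExtAux_smulC (B : V →ₗ[ℝ] V →ₗ[ℝ] ℝ) (z : ℂ) (x : Cx V) :
    bilinExtAux B (z • x) = z • bilinExtAux B x := by
  induction x using TensorProduct.induction_on with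
  | zero => simp
  | tmul w v =>
      simp only [bilinExtAux, smul_tmul', lift.tmul, LinearMap.mk₂_apply, smul_eq_mul,
        mul_smul]
  | add x y hx hy => simp only [smul_add, map_add, hx, hy]

/-- The ℂ-bilinear extension of a real bilinear form `B : V × V → ℝ` to `V_ℂ`. -/
def bilinExt (B : V →ₗ[ℝ] V →ₗ[ℝ] ℝ) : Cx V →ₗ[ℂ] DualC V where
  toFun := bilinExtAux B
  map_add' := map_add _
  map_smul' z x := by simpa using bilinExtAux_smulC B z x

/-- The `B`-transformation `e^B(X+ξ) = X + ξ + B̃(X,·)` of `𝕋_ℂV`, for a real `B`. -/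
def eB (B : V →ₗ[ℝ] V →ₗ[ℝ] ℝ) : TCx V →ₗ[ℂ] TCx V where
  toFun a := (a.1, a.2 + bilinExt B a.1)
  map_add' a b := by
    simp only [Prod.fst_add, Prod.snd_add, map_add, Prod.mk_add_mk, Prod.mk.injEq]
    exact ⟨trivial, by abel⟩
  map_smul' z a := by
    simp only [Prod.smul_fst, Prod.smul_snd, map_smul, RingHom.id_apply, Prod.smul_mk,
      Prod.mk.injEq, smul_add]

/-- The real `B`-transformation `e^B(X+α) = X + α + B(X,·)` of `𝕋V`. -/
def eBR (B : V →ₗ[ℝ] V →ₗ[ℝ] ℝ) : TR V →ₗ[ℝ] TR V where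
  toFun a := (a.1, a.2 + B a.1)
  map_add' a b := by
    simp only [Prod.fst_add, Prod.snd_add, map_add, Prod.mk_add_mk, Prod.mk.injEq]
    exact ⟨trivial, by abel⟩
  map_smul' r a := by
    simp only [Prod.smul_fst, Prod.smul_snd, map_smul, RingHom.id_apply, Prod.smul_mk,
      Prod.mk.injEq, smul_add]


/-- The range `E = pr_{V_ℂ}(L)` of a subspace of `𝕋_ℂV`. -/
def Esub (L : Submodule ℂ (TCx V)) : Submodule ℂ (Cx V) :=
  L.map (LinearMap.fst ℂ (Cx V) (DualC V))

/-- The real index `r = dim_ℂ (L ∩ L̄)`. -/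
def riL (L : Submodule ℂ (TCx V)) : ℕ := finrank ℂ ↥(L ⊓ conjSub L)

/-- The real part `K = (L ∩ L̄) ∩ 𝕋V`, as a subspace of `𝕋V`. -/
def Ksub (L : Submodule ℂ (TCx V)) : Submodule ℝ (TR V) :=
  ((L ⊓ conjSub L).restrictScalars ℝ).comap iT

/-- The distribution `D = (E + Ē) ∩ V`, as a subspace of `V`. -/
def Dsub (L : Submodule ℂ (TCx V)) : Submodule ℝ V :=
  ((Esub L ⊔ conjE (Esub L)).restrictScalars ℝ).comap iV

/-- The distribution `Δ = (E ∩ Ē) ∩ V`, as a subspace of `V`. -/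
def DeltaSub (L : Submodule ℂ (TCx V)) : Submodule ℝ V :=
  ((Esub L ⊓ conjE (Esub L)).restrictScalars ℝ).comap iV

/-- The order `s = dim V - dim D`. -/
def orderL (L : Submodule ℂ (TCx V)) : ℕ := finrank ℝ V - finrank ℝ ↥(Dsub L)

/-- The (normalized) type `k = dim_ℂ(E + Ē) - dim_ℂ E`. -/
def typeL (L : Submodule ℂ (TCx V)) : ℕ :=
  finrank ℂ ↥(Esub L ⊔ conjE (Esub L)) - finrank ℂ ↥(Esub L)


end CDirac

theorem LinearMap.exists_comp_eq_of_ker_le {R M N P : Type*} [Ring R] [AddCommGroup M]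
    [AddCommGroup N] [AddCommGroup P] [Module R M] [Module R N] [Module R P]
    {p : M →ₗ[R] N} (hp : Function.Surjective p) {g : M →ₗ[R] P}
    (h : LinearMap.ker p ≤ LinearMap.ker g) : ∃ f : N →ₗ[R] P, f ∘ₗ p = g :=
  ⟨(LinearMap.ker p).liftQ g h ∘ₗ (p.quotKerEquivOfSurjective hp).symm.toLinearMap, by
    ext x
    simp⟩

namespace CDirac

variable {V : Type*} [AddCommGroup V] [Module ℝ V]

lemma pairR_self (a : TR V) : pairR a a = a.2 a.1 := by
  simp only [pairR]
  ring

def prV (L : Submodule ℝ (TR V)) : Submodule ℝ V := L.map (LinearMap.fst ℝ V (V →ₗ[ℝ] ℝ))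

def prVOn (L : Submodule ℝ (TR V)) : ↥L →ₗ[ℝ] ↥(prV L) :=
  (LinearMap.fst ℝ V (V →ₗ[ℝ] ℝ)).submoduleMap L

lemma prVOn_surjective (L : Submodule ℝ (TR V)) : Function.Surjective (prVOn L) :=
  LinearMap.submoduleMap_surjective _ _

def covectorOn (L : Submodule ℝ (TR V)) : ↥L →ₗ[ℝ] ↥(prV L) →ₗ[ℝ] ℝ :=
  LinearMap.lcomp ℝ ℝ (prV L).subtype ∘ₗ LinearMap.snd ℝ V (V →ₗ[ℝ] ℝ) ∘ₗ L.subtype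

namespace IsLagrangianR

variable {L : Submodule ℝ (TR V)}

lemma isIsotropicR (hL : IsLagrangianR L) : IsIsotropicR L := by
  intro a ha b hb
  rw [hL] at ha
  exact ha b hb

lemma mk_zero_mem_iff (hL : IsLagrangianR L) (ξ : V →ₗ[ℝ] ℝ) :
    ((0 : V), ξ) ∈ L ↔ ∀ y ∈ prV L, ξ y = 0 := by
  have pairR_mk_zero : ∀ b : TR V, pairR ((0 : V), ξ) b = ξ b.1 / 2 := fun b => by
    simp [pairR]
  constructor
  · rintro hξ _ ⟨b, hb, rfl⟩
    simpa [pairR_mk_zero] using hL.isIsotropicR _ hξ _ hb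
  · intro hξ
    rw [hL]
    intro b hb
    rw [pairR_mk_zero, hξ b.1 ⟨b, hb, rfl⟩, zero_div]

lemma mem_iff_of_fst_eq (hL : IsLagrangianR L) {a b : TR V} (hb : b ∈ L) (hab : a.1 = b.1) :
    a ∈ L ↔ ∀ y ∈ prV L, a.2 y = b.2 y := by
  have hdecomp : b + ((0 : V), a.2 - b.2) = a := Prod.ext (by simp [hab]) (by simp)
  calc a ∈ L ↔ b + ((0 : V), a.2 - b.2) ∈ L := by rw [hdecomp]
    _ ↔ ((0 : V), a.2 - b.2) ∈ L := L.add_mem_iff_right hb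
    _ ↔ ∀ y ∈ prV L, a.2 y = b.2 y := by
      simp only [hL.mk_zero_mem_iff, LinearMap.sub_apply, sub_eq_zero]

lemma ker_prVOn_le (hL : IsLagrangianR L) :
    LinearMap.ker (prVOn L) ≤ LinearMap.ker (covectorOn L) := by
  intro a ha
  have hfst : (a : TR V).1 = 0 := congrArg Subtype.val ha
  have hmem : ((0 : V), (a : TR V).2) ∈ L := by
    rw [← hfst]
    exact a.2
  ext y
  exact (hL.mk_zero_mem_iff _).1 hmem y y.2

lemma mem_iff_of_comp_prVOn_eq (hL : IsLagrangianR L) {ε : ↥(prV L) →ₗ[ℝ] ↥(prV L) →ₗ[ℝ] ℝ}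
    (hε : ε ∘ₗ prVOn L = covectorOn L) (a : TR V) :
    a ∈ L ↔ ∃ h : a.1 ∈ prV L, ∀ y : ↥(prV L), a.2 y = ε ⟨a.1, h⟩ y := by
  constructor
  · intro ha
    exact ⟨⟨a, ha, rfl⟩, fun y => (LinearMap.congr_fun (LinearMap.congr_fun hε ⟨a, ha⟩) y).symm⟩
  · rintro ⟨h, hrel⟩
    obtain ⟨b, hb⟩ := prVOn_surjective L ⟨a.1, h⟩
    refine (hL.mem_iff_of_fst_eq b.2 (congrArg Subtype.val hb).symm).2 fun y hy => ?_
    rw [hrel ⟨y, hy⟩, ← hb, ← LinearMap.comp_apply, hε]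
    rfl

lemma apply_self_of_comp_prVOn_eq (hL : IsLagrangianR L) {ε : ↥(prV L) →ₗ[ℝ] ↥(prV L) →ₗ[ℝ] ℝ}
    (hε : ε ∘ₗ prVOn L = covectorOn L) (x : ↥(prV L)) : ε x x = 0 := by
  obtain ⟨a, rfl⟩ := prVOn_surjective L x
  rw [← LinearMap.comp_apply ε, hε]
  exact (pairR_self _).symm.trans (hL.isIsotropicR _ a.2 _ a.2)

end IsLagrangianR

lemma comp_prVOn_eq_of_mem_iff {L : Submodule ℝ (TR V)}
    {ε : ↥(prV L) →ₗ[ℝ] ↥(prV L) →ₗ[ℝ] ℝ}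
    (hε : ∀ a : TR V, a ∈ L ↔ ∃ h : a.1 ∈ prV L, ∀ y : ↥(prV L), a.2 y = ε ⟨a.1, h⟩ y) :
    ε ∘ₗ prVOn L = covectorOn L := by
  ext b y
  obtain ⟨_, hrel⟩ := (hε b).1 b.2
  exact (hrel y).symm

end CDirac

open CDirac Module

theorem stmt0_general (V : Type*) [AddCommGroup V] [Module ℝ V]
    (L : Submodule ℝ (TR V)) (hL : IsLagrangianR L)
    (E : Submodule ℝ V) (hE : E = L.map (LinearMap.fst ℝ V (V →ₗ[ℝ] ℝ))) :
    ∃! ε : ↥E →ₗ[ℝ] ↥E →ₗ[ℝ] ℝ,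
      (∀ x : ↥E, ε x x = 0) ∧
      ∀ a : TR V, a ∈ L ↔ ∃ h : a.1 ∈ E, ∀ y : ↥E, a.2 ↑y = ε ⟨a.1, h⟩ y := by
  subst hE
  obtain ⟨ε, hε⟩ :=
    LinearMap.exists_comp_eq_of_ker_le (M := ↥L) (prVOn_surjective L) hL.ker_prVOn_le
  refine ⟨ε, ⟨hL.apply_self_of_comp_prVOn_eq hε, hL.mem_iff_of_comp_prVOn_eq hε⟩, ?_⟩
  rintro ε' ⟨-, hε'⟩
  exact (LinearMap.cancel_right (prVOn_surjective L)).1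
    ((comp_prVOn_eq_of_mem_iff hε').trans hε.symm)

/-- A real lagrangian subspace `L ⊆ 𝕋V` is of the form `L(E, ε)` for a
unique alternating bilinear form `ε` on `E := pr_V L`. -/
theorem stmt0 (V : Type*) [AddCommGroup V] [Module ℝ V] [FiniteDimensional ℝ V]
    (L : Submodule ℝ (TR V)) (hL : IsLagrangianR L)
    (E : Submodule ℝ V) (hE : E = L.map (LinearMap.fst ℝ V (V →ₗ[ℝ] ℝ))) :
    ∃! ε : ↥E →ₗ[ℝ] ↥E →ₗ[ℝ] ℝ,
      (∀ x : ↥E, ε x x = 0) ∧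
      ∀ a : TR V, a ∈ L ↔ ∃ h : a.1 ∈ E, ∀ y : ↥E, a.2 ↑y = ε ⟨a.1, h⟩ y :=
  stmt0_general V L hL E hE
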